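/- arXiv:1008.2439 — 5 statements merged into one kernel-verified Lean document; each statement's English description precedes it below -/
import Mathlib

section
/- Let R be an algebraic curvature tensor on ℝ⁴ whose components with respect to the standard orthonormal basis satisfy the Chern basis conditions R_{1213} = R_{1214} = R_{1223} = R_{1224} = R_{1314} = R_{1323} = 0. Then ∑_{a,b,c} R_{abc1}² = 2( R_{1212}² + R_{1313}² + R_{1414}² + R_{1234}² + R_{1324}² + R_{1423}² + ρ_{12}² + ρ_{13}² + ρ_{14}² ), where ρ is the Ricci tensor of R. -/
/-- Ricci tensor of an algebraic curvature tensor, `ρ i j = ∑ a, R a i j a`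
(sign convention so that ρ is the usual Ricci contraction). -/
def Ric {n : ℕ} (R : Fin n → Fin n → Fin n → Fin n → ℝ) (i j : Fin n) : ℝ :=
  ∑ a, R a i j a

/-- Scalar curvature `τ = ∑ i, ρ i i`. -/
def scalCurv {n : ℕ} (R : Fin n → Fin n → Fin n → Fin n → ℝ) : ℝ :=
  ∑ i, Ric R i i

/-- Squared norm of the curvature tensor, `|R|² = ∑ R_{ijkl}²`. -/
def normR2 {n : ℕ} (R : Fin n → Fin n → Fin n → Fin n → ℝ) : ℝ :=
  ∑ i, ∑ j, ∑ k, ∑ l, (R i j k l) ^ 2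

/-- Squared norm of the Ricci tensor, `|ρ|² = ∑ ρ_{ij}²`. -/
def normRic2 {n : ℕ} (R : Fin n → Fin n → Fin n → Fin n → ℝ) : ℝ :=
  ∑ i, ∑ j, (Ric R i j) ^ 2

/-- `R` is an algebraic curvature tensor: antisymmetry in the first and last pairs,
pair-interchange symmetry, and the first Bianchi identity. -/
def IsACT {n : ℕ} (R : Fin n → Fin n → Fin n → Fin n → ℝ) : Prop :=
  (∀ i j k l, R i j k l = - R j i k l) ∧
  (∀ i j k l, R i j k l = - R i j l k) ∧
  (∀ i j k l, R i j k l = R k l i j) ∧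
  (∀ i j k l, R i j k l + R j k i l + R k i j l = 0)

/-- Kronecker delta. -/
def kron {n : ℕ} (i j : Fin n) : ℝ := if i = j then 1 else 0

/-!
By pair symmetry `∑ R_{abc1}² = ∑_c ∑_{a,b} R_{1cab}²`, and each `R_{1c··}` is a skew matrix, so
its squared norm is twice the sum of squares of its entries above the diagonal. The Chern
conditions kill all of these but nine; the three that are not on the right-hand side,
`R_{1424}`, `R_{1434}`, `R_{1334}`, are up to sign the Ricci components `ρ_{12}`, `ρ_{13}`, `ρ_{14}`,
since the Chern conditions also kill the other terms of those contractions.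
(Indices here are 1-based as in the paper; in the code `Fin 4` counts from 0.)
-/

section CurvatureSymmetries

variable {n : ℕ} {R : Fin n → Fin n → Fin n → Fin n → ℝ}

theorem apply_self_left_eq_zero (h1 : ∀ i j k l, R i j k l = - R j i k l) (i k l : Fin n) :
    R i i k l = 0 :=
  self_eq_neg.mp (h1 i i k l)

theorem apply_self_right_eq_zero (h2 : ∀ i j k l, R i j k l = - R i j l k) (i j k : Fin n) :
    R i j k k = 0 :=
  self_eq_neg.mp (h2 i j k k)

theorem Ric_eq_neg_sum (h1 : ∀ i j k l, R i j k l = - R j i k l) (i j : Fin n) :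
    Ric R i j = -∑ a, R i a j a := by
  simp only [Ric, h1 _ i, Finset.sum_neg_distrib]

theorem sum_sq_apply_last_eq (h1 : ∀ i j k l, R i j k l = - R j i k l)
    (h3 : ∀ i j k l, R i j k l = R k l i j) (d : Fin n) :
    ∑ a, ∑ b, ∑ c, R a b c d ^ 2 = ∑ c, ∑ a, ∑ b, R d c a b ^ 2 := by
  simp only [h3 _ _ _ d, h1 _ d, neg_sq]
  exact (Finset.sum_congr rfl fun _ _ => Finset.sum_comm).trans Finset.sum_comm

end CurvatureSymmetries

theorem sum_sq_of_antisymm_fin_four (X : Fin 4 → Fin 4 → ℝ) (hX : ∀ a b, X a b = -X b a) :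
    ∑ a, ∑ b, X a b ^ 2 =
      2 * (X 0 1 ^ 2 + X 0 2 ^ 2 + X 0 3 ^ 2 + X 1 2 ^ 2 + X 1 3 ^ 2 + X 2 3 ^ 2) := by
  have hdiag : ∀ a, X a a = 0 := fun a => self_eq_neg.mp (hX a a)
  simp only [Fin.sum_univ_four, hdiag, hX 1 0, hX 2 0, hX 3 0, hX 2 1, hX 3 1, hX 3 2]
  ring

theorem chern_basis_Rabc1_sq (R : Fin 4 → Fin 4 → Fin 4 → Fin 4 → ℝ) (hR : IsACT R)
    (hC1 : R 0 1 0 2 = 0) (hC2 : R 0 1 0 3 = 0) (hC3 : R 0 1 1 2 = 0)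
    (hC4 : R 0 1 1 3 = 0) (hC5 : R 0 2 0 3 = 0) (hC6 : R 0 2 1 2 = 0) :
    (∑ a, ∑ b, ∑ c, (R a b c 0) ^ 2) =
      2 * ((R 0 1 0 1) ^ 2 + (R 0 2 0 2) ^ 2 + (R 0 3 0 3) ^ 2 + (R 0 1 2 3) ^ 2
        + (R 0 2 1 3) ^ 2 + (R 0 3 1 2) ^ 2
        + (Ric R 0 1) ^ 2 + (Ric R 0 2) ^ 2 + (Ric R 0 3) ^ 2) := by
  obtain ⟨h1, h2, h3, -⟩ := hR
  have h00 := apply_self_left_eq_zero h1 0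
  have hric1 : Ric R 0 1 = -R 0 3 1 3 := by
    simp only [Ric_eq_neg_sum h1, Fin.sum_univ_four, h00, apply_self_right_eq_zero h2, hC6]
    ring
  have hric2 : Ric R 0 2 = -R 0 3 2 3 := by
    simp only [Ric_eq_neg_sum h1, Fin.sum_univ_four, h00, apply_self_right_eq_zero h2,
      h2 0 1 2 1, hC3]
    ring
  have hric3 : Ric R 0 3 = R 0 2 2 3 := by
    simp only [Ric_eq_neg_sum h1, Fin.sum_univ_four, h00, apply_self_right_eq_zero h2,
      h2 0 1 3 1, h2 0 2 3 2, hC4]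
    ring
  rw [sum_sq_apply_last_eq h1 h3,
    Finset.sum_congr rfl fun c _ => sum_sq_of_antisymm_fin_four (R 0 c) (h2 0 c)]
  simp only [Fin.sum_univ_four, h00, h3 0 2 0 1, h3 0 3 0 1, h3 0 3 0 2, hC1, hC2, hC3, hC4, hC5,
    hC6, hric1, hric2, hric3]
  ring
end

section
/- Let R' be an algebraic curvature tensor on ℝ³ with Ricci tensor ρ' and scalar curvature τ'. If (1/4)|R'|² − |ρ'|² + (τ')²/4 = 0, then for all a,b,c,d ∈ {1,2,3}: R'_{abcd} = ρ'_{ad} δ_{bc} − ρ'_{ac} δ_{bd} + δ_{ad} ρ'_{bc} − δ_{ac} ρ'_{bd} − (τ'/2)(δ_{ad} δ_{bc} − δ_{ac} δ_{bd}). -/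
/-!
Write `K(ρ, τ)` (`curvatureOfRicci`) for the right-hand side. Pairing against `K(ρ, τ)` only sees
the Ricci contraction: `⟨S, K(ρ, τ)⟩ = 4 ⟨Ric S, ρ⟩ - τ · scal S` for every `S` antisymmetric in
both pairs. In dimension three `K(ρ, tr ρ)` has Ricci tensor `ρ`, so for `ρ = Ric R` both `⟨R, K⟩`
and `|K|²` equal `4|ρ|² - τ²`, whence `|R - K|² = |R|² - 4|ρ|² + τ²`, four times the quantity
assumed to vanish.
-/

section

variable {n : ℕ}

noncomputable def curvatureOfRicci (ρ : Fin n → Fin n → ℝ) (τ : ℝ) (a b c d : Fin n) : ℝ :=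
  ρ a d * kron b c - ρ a c * kron b d + kron a d * ρ b c - kron a c * ρ b d
    - (τ / 2) * (kron a d * kron b c - kron a c * kron b d)

def curvInner (S T : Fin n → Fin n → Fin n → Fin n → ℝ) : ℝ :=
  ∑ i, ∑ j, ∑ k, ∑ l, S i j k l * T i j k l

theorem curvInner_self (S : Fin n → Fin n → Fin n → Fin n → ℝ) : curvInner S S = normR2 S := by
  simp only [curvInner, normR2, sq]

theorem normR2_sub (S T : Fin n → Fin n → Fin n → Fin n → ℝ) :
    normR2 (S - T) = normR2 S - 2 * curvInner S T + normR2 T := by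
  simp only [normR2, curvInner, Pi.sub_apply, sub_sq, Finset.sum_add_distrib,
    Finset.sum_sub_distrib, Finset.mul_sum, mul_assoc]

theorem eq_zero_of_normR2_eq_zero {S : Fin n → Fin n → Fin n → Fin n → ℝ} (h : normR2 S = 0)
    (i j k l : Fin n) : S i j k l = 0 := by
  simp only [normR2] at h
  rw [Finset.sum_eq_zero_iff_of_nonneg fun _ _ => by positivity] at h
  have h := h i (Finset.mem_univ _)
  rw [Finset.sum_eq_zero_iff_of_nonneg fun _ _ => by positivity] at h
  have h := h j (Finset.mem_univ _)
  rw [Finset.sum_eq_zero_iff_of_nonneg fun _ _ => by positivity] at h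
  have h := h k (Finset.mem_univ _)
  rw [Finset.sum_eq_zero_iff_of_nonneg fun _ _ => by positivity] at h
  exact pow_eq_zero_iff two_ne_zero |>.1 (h l (Finset.mem_univ _))

theorem curvatureOfRicci_swap_left (ρ : Fin n → Fin n → ℝ) (τ : ℝ) (a b c d : Fin n) :
    curvatureOfRicci ρ τ a b c d = -curvatureOfRicci ρ τ b a c d := by
  simp only [curvatureOfRicci]; ring

theorem curvatureOfRicci_swap_right (ρ : Fin n → Fin n → ℝ) (τ : ℝ) (a b c d : Fin n) :
    curvatureOfRicci ρ τ a b c d = -curvatureOfRicci ρ τ a b d c := by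
  simp only [curvatureOfRicci]; ring

theorem Ric_curvatureOfRicci (ρ : Fin n → Fin n → ℝ) (τ : ℝ) (i j : Fin n) :
    Ric (curvatureOfRicci ρ τ) i j
      = (n - 2) * ρ i j + (∑ a, ρ a a - (n - 1) / 2 * τ) * kron i j := by
  rcases eq_or_ne i j with rfl | hij
  · simp [Ric, curvatureOfRicci, kron, Finset.sum_add_distrib, Finset.sum_sub_distrib,
      ← Finset.mul_sum]
    ring
  · simp [Ric, curvatureOfRicci, kron, hij, Finset.sum_add_distrib, Finset.sum_sub_distrib]
    ring

theorem curvInner_curvatureOfRicci {S : Fin n → Fin n → Fin n → Fin n → ℝ}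
    (h₁ : ∀ i j k l, S i j k l = -S j i k l) (h₂ : ∀ i j k l, S i j k l = -S i j l k)
    (ρ : Fin n → Fin n → ℝ) (τ : ℝ) :
    curvInner S (curvatureOfRicci ρ τ) = 4 * ∑ i, ∑ j, Ric S i j * ρ i j - scalCurv S * τ := by
  have contract₁ : ∑ a, ∑ b, ∑ d, S a b b d * ρ a d = ∑ a, ∑ d, Ric S a d * ρ a d := by
    simp only [Ric, Finset.sum_mul]
    refine Finset.sum_congr rfl fun a _ => ?_
    rw [Finset.sum_comm]
    exact Finset.sum_congr rfl fun d _ => Finset.sum_congr rfl fun b _ => by rw [h₁, h₂, neg_neg]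
  have contract₂ : ∑ a, ∑ b, ∑ c, S a b c b * ρ a c = -∑ a, ∑ c, Ric S a c * ρ a c := by
    simp only [Ric, Finset.sum_mul, ← Finset.sum_neg_distrib]
    refine Finset.sum_congr rfl fun a _ => ?_
    rw [Finset.sum_comm]
    exact Finset.sum_congr rfl fun c _ => Finset.sum_congr rfl fun b _ => by rw [h₁, neg_mul]
  have contract₃ : ∑ a, ∑ b, ∑ c, S a b c a * ρ b c = ∑ b, ∑ c, Ric S b c * ρ b c := by
    simp only [Ric, Finset.sum_mul]
    rw [Finset.sum_comm]
    exact Finset.sum_congr rfl fun b _ => Finset.sum_comm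
  have contract₄ : ∑ a, ∑ b, ∑ d, S a b a d * ρ b d = -∑ b, ∑ d, Ric S b d * ρ b d := by
    rw [← contract₃, ← Finset.sum_neg_distrib]
    refine Finset.sum_congr rfl fun a _ => ?_
    simp only [← Finset.sum_neg_distrib]
    exact Finset.sum_congr rfl fun b _ => Finset.sum_congr rfl fun d _ => by rw [h₂, neg_mul]
  have scal₁ : ∑ a, ∑ b, S a b b a * (τ / 2) = scalCurv S * (τ / 2) := by
    simp only [scalCurv, Ric, Finset.sum_mul]
    rw [Finset.sum_comm]
  have scal₂ : ∑ a, ∑ b, S a b a b * (τ / 2) = -(scalCurv S * (τ / 2)) := by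
    simp only [← scal₁, ← Finset.sum_neg_distrib]
    exact Finset.sum_congr rfl fun a _ => Finset.sum_congr rfl fun b _ => by rw [h₂, neg_mul]
  simp only [curvInner, curvatureOfRicci, kron, mul_ite, mul_one, mul_zero, ite_mul, one_mul,
    zero_mul, mul_sub, mul_add, Finset.sum_sub_distrib, Finset.sum_add_distrib,
    Finset.sum_ite_irrel, Finset.sum_const_zero, Finset.sum_ite_eq, Finset.mem_univ, if_true]
  rw [contract₁, contract₂, contract₃, contract₄, scal₁, scal₂]
  ring

end

theorem Ric_curvatureOfRicci_trace (ρ : Fin 3 → Fin 3 → ℝ) :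
    Ric (curvatureOfRicci ρ (∑ a, ρ a a)) = ρ := by
  ext i j
  rw [Ric_curvatureOfRicci]
  norm_num

theorem normR2_sub_curvatureOfRicci {S : Fin 3 → Fin 3 → Fin 3 → Fin 3 → ℝ}
    (h₁ : ∀ i j k l, S i j k l = -S j i k l) (h₂ : ∀ i j k l, S i j k l = -S i j l k) :
    normR2 (S - curvatureOfRicci (Ric S) (scalCurv S))
      = normR2 S - 4 * normRic2 S + scalCurv S ^ 2 := by
  have hRicK : Ric (curvatureOfRicci (Ric S) (scalCurv S)) = Ric S :=
    Ric_curvatureOfRicci_trace (Ric S)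
  have hScalK : scalCurv (curvatureOfRicci (Ric S) (scalCurv S)) = scalCurv S := by
    rw [scalCurv, hRicK, scalCurv]
  have hInner : curvInner S (curvatureOfRicci (Ric S) (scalCurv S))
      = 4 * normRic2 S - scalCurv S ^ 2 := by
    rw [curvInner_curvatureOfRicci h₁ h₂, normRic2]
    simp only [sq]
  have hNormK : normR2 (curvatureOfRicci (Ric S) (scalCurv S))
      = 4 * normRic2 S - scalCurv S ^ 2 := by
    rw [← curvInner_self, curvInner_curvatureOfRicci (curvatureOfRicci_swap_left _ _)
      (curvatureOfRicci_swap_right _ _), hScalK, hRicK, normRic2]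
    simp only [sq]
  rw [normR2_sub, hInner, hNormK]
  ring

theorem dim3_curvature_from_ricci (R' : Fin 3 → Fin 3 → Fin 3 → Fin 3 → ℝ) (hR : IsACT R')
    (h : (1 / 4) * normR2 R' - normRic2 R' + (scalCurv R') ^ 2 / 4 = 0) :
    ∀ a b c d : Fin 3, R' a b c d =
        Ric R' a d * kron b c - Ric R' a c * kron b d + kron a d * Ric R' b c
          - kron a c * Ric R' b d
          - (scalCurv R' / 2) * (kron a d * kron b c - kron a c * kron b d) := by
  obtain ⟨h₁, h₂, -, -⟩ := hR
  have hNorm : normR2 (R' - curvatureOfRicci (Ric R') (scalCurv R')) = 0 := by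
    rw [normR2_sub_curvatureOfRicci h₁ h₂]
    linarith
  intro a b c d
  exact sub_eq_zero.1 (eq_zero_of_normR2_eq_zero hNorm a b c d)
end

section
/- Let R' be an algebraic curvature tensor on ℝ³, and let R be the algebraic curvature tensor on ℝ⁴ = ℝ³ × ℝ extending R' trivially, i.e., R_{abcd} = R'_{abcd} when all of a,b,c,d ∈ {1,2,3}, and R_{abcd} = 0 whenever any index equals 4. Then R is an algebraic curvature tensor on ℝ⁴, and the component (i=j=4) of the 4-dimensional curvature identity applied to R yields exactly (1/4)|R'|² − |ρ'|² + (τ')²/4 = 0. -/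
theorem normR2_sub_four_mul_normRic2_add_sq_scalCurv_eq_zero
    (R : Fin 3 → Fin 3 → Fin 3 → Fin 3 → ℝ) (h₁ : ∀ i j k l, R i j k l = - R j i k l)
    (h₂ : ∀ i j k l, R i j k l = - R i j l k) :
    normR2 R - 4 * normRic2 R + scalCurv R ^ 2 = 0 := by
  have diag₁ : ∀ i k l, R i i k l = 0 := fun i k l => by linarith [h₁ i i k l]
  have diag₂ : ∀ i j k, R i j k k = 0 := fun i j k => by linarith [h₂ i j k k]
  -- Orienting every index pair increasingly leaves nine independent components.
  simp only [normR2, normRic2, scalCurv, Ric, Fin.sum_univ_three, diag₁, diag₂,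
    h₁ 1 0, h₁ 2 0, h₁ 2 1, h₂ _ _ 1 0, h₂ _ _ 2 0, h₂ _ _ 2 1]
  ring

def IsTrivialExtension {n : ℕ} (R' : Fin n → Fin n → Fin n → Fin n → ℝ)
    (R : Fin (n + 1) → Fin (n + 1) → Fin (n + 1) → Fin (n + 1) → ℝ) : Prop :=
  (∀ a b c d : Fin n, R a.castSucc b.castSucc c.castSucc d.castSucc = R' a b c d) ∧
  ∀ a b c d : Fin (n + 1),
    a = Fin.last n ∨ b = Fin.last n ∨ c = Fin.last n ∨ d = Fin.last n → R a b c d = 0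

namespace IsTrivialExtension

variable {n : ℕ} {R' : Fin n → Fin n → Fin n → Fin n → ℝ}
  {R : Fin (n + 1) → Fin (n + 1) → Fin (n + 1) → Fin (n + 1) → ℝ}
  (hR : IsTrivialExtension R' R)
include hR

theorem apply_castSucc (a b c d : Fin n) :
    R a.castSucc b.castSucc c.castSucc d.castSucc = R' a b c d := hR.1 a b c d

theorem apply_last_fst (b c d : Fin (n + 1)) : R (Fin.last n) b c d = 0 :=
  hR.2 _ _ _ _ (.inl rfl)

theorem apply_last_snd (a c d : Fin (n + 1)) : R a (Fin.last n) c d = 0 :=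
  hR.2 _ _ _ _ (.inr (.inl rfl))

theorem apply_last_thd (a b d : Fin (n + 1)) : R a b (Fin.last n) d = 0 :=
  hR.2 _ _ _ _ (.inr (.inr (.inl rfl)))

theorem apply_last_fth (a b c : Fin (n + 1)) : R a b c (Fin.last n) = 0 :=
  hR.2 _ _ _ _ (.inr (.inr (.inr rfl)))

theorem isACT (hR' : IsACT R') : IsACT R := by
  obtain ⟨h₁, h₂, h₃, h₄⟩ := hR'
  refine ⟨?_, ?_, ?_, ?_⟩ <;> intro i j k l <;>
    cases i using Fin.lastCases <;> cases j using Fin.lastCases <;>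
    cases k using Fin.lastCases <;> cases l using Fin.lastCases <;>
    simp only [hR.apply_castSucc, hR.apply_last_fst, hR.apply_last_snd, hR.apply_last_thd,
      hR.apply_last_fth, neg_zero, add_zero] <;>
    first | exact h₁ .. | exact h₂ .. | exact h₃ .. | exact h₄ ..

theorem ric_castSucc (i j : Fin n) : Ric R i.castSucc j.castSucc = Ric R' i j := by
  simp [Ric, Fin.sum_univ_castSucc, hR.apply_castSucc, hR.apply_last_fst]

theorem ric_last_left (j : Fin (n + 1)) : Ric R (Fin.last n) j = 0 := by
  simp [Ric, hR.apply_last_snd]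

theorem ric_last_right (i : Fin (n + 1)) : Ric R i (Fin.last n) = 0 := by
  simp [Ric, hR.apply_last_thd]

theorem scalCurv_eq : scalCurv R = scalCurv R' := by
  simp [scalCurv, Fin.sum_univ_castSucc, hR.ric_castSucc, hR.ric_last_left]

theorem normR2_eq : normR2 R = normR2 R' := by
  simp [normR2, Fin.sum_univ_castSucc, hR.apply_castSucc, hR.apply_last_fst,
    hR.apply_last_snd, hR.apply_last_thd, hR.apply_last_fth]

theorem normRic2_eq : normRic2 R = normRic2 R' := by
  simp [normRic2, Fin.sum_univ_castSucc, hR.ric_castSucc, hR.ric_last_left, hR.ric_last_right]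

theorem curvature_identity_last_last :
    (∑ a, ∑ b, ∑ c, R a b c (Fin.last n) * R a b c (Fin.last n))
        - 2 * (∑ a, Ric R (Fin.last n) a * Ric R (Fin.last n) a)
        - 2 * (∑ a, ∑ b, Ric R a b * R (Fin.last n) a b (Fin.last n))
        + scalCurv R * Ric R (Fin.last n) (Fin.last n)
        - (1 / 4) * (normR2 R - 4 * normRic2 R + (scalCurv R) ^ 2)
      = -(1 / 4) * (normR2 R' - 4 * normRic2 R' + (scalCurv R') ^ 2) := by
  simp [hR.scalCurv_eq, hR.normR2_eq, hR.normRic2_eq, hR.ric_last_left, hR.apply_last_fst,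
    hR.apply_last_fth]

end IsTrivialExtension

theorem product_with_line_identity (R' : Fin 3 → Fin 3 → Fin 3 → Fin 3 → ℝ) (hR : IsACT R')
    (R : Fin 4 → Fin 4 → Fin 4 → Fin 4 → ℝ)
    (hext : ∀ a b c d : Fin 3,
      R a.castSucc b.castSucc c.castSucc d.castSucc = R' a b c d)
    (hzero : ∀ a b c d : Fin 4, a = 3 ∨ b = 3 ∨ c = 3 ∨ d = 3 → R a b c d = 0) :
    IsACT R ∧
    ((∑ a, ∑ b, ∑ c, R a b c 3 * R a b c 3) - 2 * (∑ a, Ric R 3 a * Ric R 3 a)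
        - 2 * (∑ a, ∑ b, Ric R a b * R 3 a b 3) + scalCurv R * Ric R 3 3
        - (1 / 4) * (normR2 R - 4 * normRic2 R + (scalCurv R) ^ 2)
      = -((1 / 4) * normR2 R' - normRic2 R' + (scalCurv R') ^ 2 / 4)) ∧
    (1 / 4) * normR2 R' - normRic2 R' + (scalCurv R') ^ 2 / 4 = 0 := by
  have htriv : IsTrivialExtension R' R := ⟨hext, hzero⟩
  have hdim3 := normR2_sub_four_mul_normRic2_add_sq_scalCurv_eq_zero R' hR.1 hR.2.1
  exact ⟨htriv.isACT hR, htriv.curvature_identity_last_last.trans (by ring), by linarith⟩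
end

section
/- Let R be an algebraic curvature tensor on ℝ⁴ that is Einstein, i.e., its Ricci tensor satisfies ρ_{ij} = (τ/4) δ_{ij} where τ is the scalar curvature. Then R is weakly Einstein: ∑_{a,b,c} R_{abci} R_{abcj} = (1/4)|R|² δ_{ij} for all i, j ∈ {1,2,3,4}. -/
def IsSymmOnBivectors {n : ℕ} (R : Fin n → Fin n → Fin n → Fin n → ℝ) : Prop :=
  (∀ i j k l, R i j k l = - R i j l k) ∧ ∀ i j k l, R i j k l = R k l i j

theorem IsACT.isSymmOnBivectors {n : ℕ} {R : Fin n → Fin n → Fin n → Fin n → ℝ} (hR : IsACT R) :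
    IsSymmOnBivectors R :=
  ⟨hR.2.1, hR.2.2.1⟩

noncomputable def tracelessRic {n : ℕ} (R : Fin n → Fin n → Fin n → Fin n → ℝ) (i j : Fin n) : ℝ :=
  Ric R i j - scalCurv R / n * kron i j

namespace IsSymmOnBivectors

variable {n : ℕ} {R : Fin n → Fin n → Fin n → Fin n → ℝ}

theorem antisymm_left (hR : IsSymmOnBivectors R) (i j k l : Fin n) :
    R i j k l = - R j i k l := by
  rw [hR.2 i j, hR.1 k l i j, hR.2 k l j i]

theorem self_left_eq_zero (hR : IsSymmOnBivectors R) (i k l : Fin n) : R i i k l = 0 := by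
  linarith [hR.antisymm_left i i k l]

theorem self_right_eq_zero (hR : IsSymmOnBivectors R) (i j k : Fin n) : R i j k k = 0 := by
  linarith [hR.1 i j k k]

end IsSymmOnBivectors

set_option maxHeartbeats 1000000 in
theorem IsSymmOnBivectors.dim_four_identity {R : Fin 4 → Fin 4 → Fin 4 → Fin 4 → ℝ}
    (hR : IsSymmOnBivectors R) (i j : Fin 4) :
    ∑ a, ∑ b, ∑ c, R a b c i * R a b c j - normR2 R / 4 * kron i j =
      2 * ∑ a, tracelessRic R i a * tracelessRic R a j
        + 2 * ∑ a, ∑ b, R a i j b * tracelessRic R a b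
        + scalCurv R / 2 * tracelessRic R i j
        - (∑ a, ∑ b, tracelessRic R a b ^ 2) * kron i j := by
  -- Rewriting every entry `R a b c d` to one with `a < b`, `c < d`, `(a, b) ≤ (c, d)` leaves 21
  -- independent entries, in which both sides are the same quadratic polynomial.
  have swapL := hR.antisymm_left
  have swapR := hR.1
  have swapP := hR.2
  fin_cases i <;> fin_cases j <;> simp only [Fin.reduceFinMk, Fin.isValue] <;>
    simp only [tracelessRic, scalCurv, Ric, normR2, kron, Fin.sum_univ_four, Fin.reduceEq,
      ↓reduceIte, hR.self_left_eq_zero, hR.self_right_eq_zero,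
      swapL 1 0, swapL 2 0, swapL 2 1, swapL 3 0, swapL 3 1, swapL 3 2,
      swapR _ _ 1 0, swapR _ _ 2 0, swapR _ _ 2 1, swapR _ _ 3 0, swapR _ _ 3 1, swapR _ _ 3 2,
      swapP 1 _ 0, swapP 2 _ 0, swapP 2 _ 1,
      swapP 0 2 0 1, swapP 0 3 0 1, swapP 0 3 0 2, swapP 1 3 1 2] <;>
    ring

theorem einstein_is_weakly_einstein (R : Fin 4 → Fin 4 → Fin 4 → Fin 4 → ℝ) (hR : IsACT R)
    (hE : ∀ i j, Ric R i j = scalCurv R / 4 * kron i j) :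
    ∀ i j, (∑ a, ∑ b, ∑ c, R a b c i * R a b c j) = (1 / 4) * normR2 R * kron i j := by
  have traceless : ∀ a b, tracelessRic R a b = 0 := fun a b => by
    rw [tracelessRic, hE]
    norm_num
  intro i j
  have identity := hR.isSymmOnBivectors.dim_four_identity i j
  simp only [traceless, mul_zero, zero_mul, Finset.sum_const_zero, sub_zero, add_zero, ne_eq,
    OfNat.ofNat_ne_zero, not_false_eq_true, zero_pow] at identity
  linarith
end

section
/- Let R be the algebraic curvature tensor on ℝ⁴ = ℝ² × ℝ² given by the product of two 2-dimensional constant-curvature pieces with Gaussian curvatures c and −c (c ≠ 0): the only nonzero components up to symmetries are R_{1212} = c and R_{3434} = −c. Then R is not Einstein (its Ricci tensor is not a multiple of the identity), but R is weakly Einstein: ∑_{a,b,c} R_{abci} R_{abcj} = (1/4)|R|² δ_{ij} for all i, j. -/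
/-- The curvature tensor of the product `M₁²(c) × M₂²(-c)` of two surfaces of
constant Gaussian curvatures `c` and `-c`: the only nonzero components up to
symmetries are `R 0 1 0 1 = c` and `R 2 3 2 3 = -c`. -/
def prodCurv (c : ℝ) (i j k l : Fin 4) : ℝ :=
  c * (kron i 0 * kron j 1 - kron i 1 * kron j 0) *
      (kron k 0 * kron l 1 - kron k 1 * kron l 0)
    - c * (kron i 2 * kron j 3 - kron i 3 * kron j 2) *
      (kron k 2 * kron l 3 - kron k 3 * kron l 2)

theorem normR2_eq_sum_contraction_diag {n : ℕ} (R : Fin n → Fin n → Fin n → Fin n → ℝ) :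
    normR2 R = ∑ i, ∑ a, ∑ b, ∑ d, R a b d i * R a b d i := by
  unfold normR2
  symm
  rw [Finset.sum_comm]
  refine Finset.sum_congr rfl fun a _ => ?_
  rw [Finset.sum_comm]
  refine Finset.sum_congr rfl fun b _ => ?_
  rw [Finset.sum_comm]
  simp only [sq]

theorem isACT_prodCurv (c : ℝ) : IsACT (prodCurv c) := by
  refine ⟨?_, ?_, ?_, ?_⟩ <;> intro i j k l <;> simp only [prodCurv] <;> ring

theorem prodCurv_zero_one_zero_one (c : ℝ) : prodCurv c 0 1 0 1 = c := by
  simp [prodCurv, kron]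

theorem prodCurv_two_three_two_three (c : ℝ) : prodCurv c 2 3 2 3 = -c := by
  simp [prodCurv, kron]

theorem ric_prodCurv (c : ℝ) (i j : Fin 4) :
    Ric (prodCurv c) i j = ![-c, -c, c, c] i * kron i j := by
  fin_cases i <;> fin_cases j <;> simp [Ric, prodCurv, kron]

theorem scalCurv_prodCurv (c : ℝ) : scalCurv (prodCurv c) = 0 := by
  simp [scalCurv, Fin.sum_univ_four, ric_prodCurv, kron]

theorem sum_prodCurv_mul_prodCurv (c : ℝ) (i j : Fin 4) :
    ∑ a, ∑ b, ∑ d, prodCurv c a b d i * prodCurv c a b d j = 2 * c ^ 2 * kron i j := by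
  fin_cases i <;> fin_cases j <;> simp [Fin.sum_univ_four, prodCurv, kron] <;> ring

theorem normR2_prodCurv (c : ℝ) : normR2 (prodCurv c) = 8 * c ^ 2 := by
  simp only [normR2_eq_sum_contraction_diag, sum_prodCurv_mul_prodCurv, kron, if_true, mul_one,
    Finset.sum_const, Finset.card_univ, Fintype.card_fin, nsmul_eq_mul]
  ring

theorem weakly_einstein_not_einstein_example (c : ℝ) (hc : c ≠ 0) :
    IsACT (prodCurv c) ∧ prodCurv c 0 1 0 1 = c ∧ prodCurv c 2 3 2 3 = -c ∧
    (¬ ∀ i j, Ric (prodCurv c) i j = scalCurv (prodCurv c) / 4 * kron i j) ∧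
    (∀ i j, (∑ a, ∑ b, ∑ d, prodCurv c a b d i * prodCurv c a b d j)
      = (1 / 4) * normR2 (prodCurv c) * kron i j) := by
  refine ⟨isACT_prodCurv c, prodCurv_zero_one_zero_one c, prodCurv_two_three_two_three c,
    fun hEinstein => hc ?_, fun i j => ?_⟩
  · simpa [ric_prodCurv, scalCurv_prodCurv, kron] using hEinstein 0 0
  · rw [sum_prodCurv_mul_prodCurv, normR2_prodCurv]
    ring
end
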